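/- Let n be an integer, g ≥ 2, and c₁, ..., c_k ∈ BS(1,n). The nonorientable equation x₁² ⋯ x_g² ∏_{i=1}^k z_i⁻¹ c_i z_i = 1 has a solution in BS(1,n) if and only if σ_t(c₁⋯c_k) is even, and moreover n is even or σ_a(c₁⋯c_k) is even. -/

import Mathlib

/-- Relators of the Baumslag–Solitar group BS(1,n) = ⟨a,t | t⁻¹ a t = aⁿ⟩,
with `false` standing for `a` and `true` for `t`. -/
def BSrels (n : ℤ) : Set (FreeGroup Bool) :=
  {(FreeGroup.of true)⁻¹ * FreeGroup.of false * FreeGroup.of true *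
    (FreeGroup.of false ^ n)⁻¹}

/-- The Baumslag–Solitar group BS(1,n). -/
abbrev BS (n : ℤ) := PresentedGroup (BSrels n)

/-- The `a`-exponent sum of a word on `{a, t}`. -/
def sigmaA (w : FreeGroup Bool) : ℤ :=
  Multiplicative.toAdd
    (FreeGroup.lift (fun b => Multiplicative.ofAdd (if b then (0 : ℤ) else 1)) w)

/-- The `t`-exponent sum of a word on `{a, t}`. -/
def sigmaT (w : FreeGroup Bool) : ℤ :=
  Multiplicative.toAdd
    (FreeGroup.lift (fun b => Multiplicative.ofAdd (if b then (1 : ℤ) else 0)) w)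

/-!
A solution of `x₁² ⋯ x_g² ∏ zᵢ⁻¹ cᵢ zᵢ = 1` makes the image of `c₁ ⋯ c_k` a square in every
abelian quotient. The `t`-exponent sum `BS(1,n) → ℤ` and, for odd `n`, the `a`-exponent sum mod 2
(well defined because the relation identifies the exponents `1` and `n`) give the two parity
conditions.

Conversely, with `aⱼ = tʲ a t⁻ʲ` every element of `BS(1,n)` has the form `aⱼᵉ tᵐ`, and
`aⱼ = aⱼ₊₁ⁿ`. If `m = 2q` then `aⱼᵉ tᵐ = (t^q)² a_{j-m}ᵉ`, and `a_{j-m}ᵉ` is a square as soon as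
`e` or `n` is even. Hence `c₁ ⋯ c_k = x² y²`, and `x₁ = y⁻¹`, `x₂ = x⁻¹`, all other unknowns `1`,
is a solution.
-/

section NonorientableEquation

variable {G : Type*} [Group G] {g k : ℕ}

theorem isSquare_map_prod_of_sq_prod_mul_conj_prod_eq_one {H : Type*} [CommGroup H]
    (φ : G →* H) {x : Fin g → G} {z c : Fin k → G}
    (h : (List.ofFn fun j => x j ^ 2).prod * (List.ofFn fun i => (z i)⁻¹ * c i * z i).prod = 1) :
    IsSquare (φ (List.ofFn c).prod) := by
  have hconj : φ (List.ofFn fun i => (z i)⁻¹ * c i * z i).prod = φ (List.ofFn c).prod := by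
    simp only [map_list_prod, List.map_ofFn, Function.comp_def, map_mul, map_inv,
      inv_mul_cancel_comm]
  have hsq : φ (List.ofFn fun j => x j ^ 2).prod = (∏ j, φ (x j)) ^ 2 := by
    simp only [map_list_prod, List.map_ofFn, List.prod_ofFn, Function.comp_def, map_pow,
      Finset.prod_pow]
  refine ⟨(∏ j, φ (x j))⁻¹, ?_⟩
  rw [← hconj, ← sq, inv_pow, ← hsq, eq_inv_iff_mul_eq_one, mul_comm, ← map_mul, h, map_one]

theorem exists_sq_prod_mul_conj_prod_eq_one (hg : 2 ≤ g) (c : Fin k → G) {x y : G}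
    (h : x ^ 2 * y ^ 2 = (List.ofFn c).prod) :
    ∃ (x : Fin g → G) (z : Fin k → G),
      (List.ofFn fun j => x j ^ 2).prod * (List.ofFn fun i => (z i)⁻¹ * c i * z i).prod = 1 := by
  obtain ⟨m, rfl⟩ : ∃ m, g = m + 2 := ⟨g - 2, by omega⟩
  refine ⟨Fin.cons y⁻¹ (Fin.cons x⁻¹ 1), 1, ?_⟩
  simp [List.ofFn_succ, ← h, ← mul_assoc]

end NonorientableEquation

namespace BS

variable {n : ℤ}

noncomputable def a : BS n := PresentedGroup.of false

noncomputable def t : BS n := PresentedGroup.of true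

theorem t_inv_mul_a_mul_t : (t⁻¹ * a * t : BS n) = a ^ n := by
  have h := PresentedGroup.one_of_mem (rels := BSrels n) (Set.mem_singleton _)
  simp only [map_mul, map_inv, map_zpow] at h
  exact mul_inv_eq_one.1 h

noncomputable def aConj (j : ℤ) : BS n := MulAut.conj (t ^ j) a

theorem aConj_zpow (j e : ℤ) : (aConj j ^ e : BS n) = t ^ j * a ^ e * (t ^ j)⁻¹ := by
  rw [aConj, ← map_zpow, MulAut.conj_apply]

theorem aConj_zero : (aConj 0 : BS n) = a := by
  simp [aConj]

theorem aConj_eq_aConj_add_one_zpow (j : ℤ) : (aConj j : BS n) = aConj (j + 1) ^ n := by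
  rw [aConj_zpow, ← t_inv_mul_a_mul_t, aConj, MulAut.conj_apply, zpow_add_one]
  group

theorem aConj_eq_aConj_add_zpow_pow (j : ℤ) (d : ℕ) :
    (aConj j : BS n) = aConj (j + d) ^ n ^ d := by
  induction d with
  | zero => simp
  | succ d ih =>
    rw [ih, aConj_eq_aConj_add_one_zpow (j + d), ← zpow_mul, pow_succ', Nat.cast_succ, add_assoc]

theorem aConj_add_zpow_mul_t_zpow (j m e : ℤ) :
    (aConj (j + m) ^ e * t ^ m : BS n) = t ^ m * aConj j ^ e := by
  rw [aConj_zpow, aConj_zpow, zpow_add]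
  group

theorem exists_aConj_zpow_mul_aConj_zpow_eq (i j e₁ e₂ : ℤ) :
    ∃ L e : ℤ, (aConj i ^ e₁ * aConj j ^ e₂ : BS n) = aConj L ^ e := by
  obtain ⟨d₁, h₁⟩ := Int.le.dest (le_max_left i j)
  obtain ⟨d₂, h₂⟩ := Int.le.dest (le_max_right i j)
  refine ⟨max i j, n ^ d₁ * e₁ + n ^ d₂ * e₂, ?_⟩
  rw [aConj_eq_aConj_add_zpow_pow i d₁, aConj_eq_aConj_add_zpow_pow j d₂, h₁, h₂, ← zpow_mul,
    ← zpow_mul, ← zpow_add]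

theorem exists_eq_aConj_zpow_mul_t_zpow (x : BS n) : ∃ L e m : ℤ, x = aConj L ^ e * t ^ m := by
  induction x using PresentedGroup.induction_on with | H w => ?_
  induction w using FreeGroup.induction_on with
  | C1 => exact ⟨0, 0, 0, by simp⟩
  | of b =>
    cases b
    · exact ⟨0, 1, 0, by simp [aConj_zero]; rfl⟩
    · exact ⟨0, 0, 1, by simp; rfl⟩
  | inv_of b _ =>
    cases b
    · exact ⟨0, -1, 0, by simp [aConj_zero]; rfl⟩
    · exact ⟨0, 0, -1, by simp; rfl⟩
  | mul u v hu hv =>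
    obtain ⟨L₁, e₁, m₁, hu⟩ := hu
    obtain ⟨L₂, e₂, m₂, hv⟩ := hv
    obtain ⟨L, e, hLe⟩ := exists_aConj_zpow_mul_aConj_zpow_eq (n := n) L₁ (L₂ + m₁) e₁ e₂
    refine ⟨L, e, m₁ + m₂, ?_⟩
    rw [map_mul, hu, hv, ← hLe, zpow_add, mul_assoc, ← mul_assoc (t ^ m₁),
      ← aConj_add_zpow_mul_t_zpow]
    group

noncomputable def tExp : BS n →* Multiplicative ℤ :=
  PresentedGroup.toGroup (f := fun b => Multiplicative.ofAdd (if b then 1 else 0)) <| by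
    rintro _ rfl
    simp

theorem tExp_mk (w : FreeGroup Bool) :
    tExp (PresentedGroup.mk (BSrels n) w) = Multiplicative.ofAdd (sigmaT w) := rfl

theorem tExp_aConj_zpow_mul_t_zpow (L e m : ℤ) :
    tExp (aConj L ^ e * t ^ m : BS n) = Multiplicative.ofAdd m := by
  simp [aConj_zpow, a, t, tExp, ← ofAdd_zsmul]

noncomputable def aExpMod (m : ℕ) (h : (n : ZMod m) = 1) : BS n →* Multiplicative (ZMod m) :=
  PresentedGroup.toGroup (f := fun b => Multiplicative.ofAdd (if b then 0 else 1)) <| by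
    rintro _ rfl
    simp [← ofAdd_zsmul, ← ofAdd_neg, ← ofAdd_add, h]

theorem aExpMod_mk (m : ℕ) (h : (n : ZMod m) = 1) (w : FreeGroup Bool) :
    aExpMod m h (PresentedGroup.mk (BSrels n) w) = Multiplicative.ofAdd (sigmaA w : ZMod m) := by
  have hcomp : (aExpMod m h).comp (PresentedGroup.mk (BSrels n)) =
      (Int.castAddHom (ZMod m)).toMultiplicative.comp
        (FreeGroup.lift fun b => Multiplicative.ofAdd (if b then 0 else 1)) := by
    refine FreeGroup.ext_hom _ _ fun b => ?_
    change aExpMod m h (PresentedGroup.of b) = _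
    cases b <;> simp [aExpMod, AddMonoidHom.toMultiplicative]
  exact DFunLike.congr_fun hcomp w

theorem aExpMod_aConj_zpow_mul_t_zpow (m : ℕ) (h : (n : ZMod m) = 1) (L e k : ℤ) :
    aExpMod m h (aConj L ^ e * t ^ k : BS n) = Multiplicative.ofAdd (e : ZMod m) := by
  simp [aConj_zpow, a, t, aExpMod, ← ofAdd_zsmul]

theorem isSquare_aConj_zpow (j e : ℤ) (h : Even n ∨ Even e) : IsSquare (aConj j ^ e : BS n) := by
  rcases h with hn | he
  · rw [aConj_eq_aConj_add_one_zpow, ← zpow_mul]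
    exact (hn.mul_right e).isSquare_zpow _
  · exact he.isSquare_zpow _

theorem exists_sq_mul_sq_eq_mk (w : FreeGroup Bool) (ht : Even (sigmaT w))
    (ha : Even n ∨ Even (sigmaA w)) :
    ∃ x y : BS n, x ^ 2 * y ^ 2 = PresentedGroup.mk (BSrels n) w := by
  obtain ⟨L, e, m, hw⟩ := exists_eq_aConj_zpow_mul_t_zpow (PresentedGroup.mk (BSrels n) w)
  have hm : m = sigmaT w := by
    simpa [tExp_mk, tExp_aConj_zpow_mul_t_zpow] using (congrArg tExp hw).symm
  have he : Even n ∨ Even e := by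
    refine (em (Even n)).imp id fun hn => ?_
    have hodd : (n : ZMod 2) = 1 := ZMod.intCast_eq_one_iff_odd.2 (Int.not_even_iff_odd.1 hn)
    have hcast : (sigmaA w : ZMod 2) = e := by
      simpa [aExpMod_mk, aExpMod_aConj_zpow_mul_t_zpow] using congrArg (aExpMod 2 hodd) hw
    rw [← ZMod.intCast_eq_zero_iff_even, ← hcast, ZMod.intCast_eq_zero_iff_even]
    exact ha.resolve_left hn
  obtain ⟨j, rfl⟩ : ∃ j, L = j + m := ⟨L - m, by ring⟩
  obtain ⟨y, hy⟩ := isSquare_aConj_zpow j e he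
  obtain ⟨q, hq⟩ := ht
  refine ⟨t ^ q, y, ?_⟩
  rw [hw, aConj_add_zpow_mul_t_zpow, hy, hm, hq, zpow_add, sq, sq]

theorem even_sigmaA_of_isSquare_aExpMod_two (h : (n : ZMod 2) = 1) {w : FreeGroup Bool}
    (hw : IsSquare (aExpMod 2 h (PresentedGroup.mk (BSrels n) w))) : Even (sigmaA w) := by
  rw [aExpMod_mk, isSquare_ofAdd_iff] at hw
  obtain ⟨r, hr⟩ := hw
  rw [← ZMod.intCast_eq_zero_iff_even, hr, CharTwo.add_self_eq_zero]

end BS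

/-- The nonorientable equation of genus `g ≥ 2` with constants `c i` (given by
words `w i` on `{a,t}`), namely `x₁²⋯x_g² ∏_i z_i⁻¹ c_i z_i = 1`, has a solution
in BS(1,n) iff `σ_t(c₁⋯c_k)` is even and, moreover, `n` is even or
`σ_a(c₁⋯c_k)` is even. -/
theorem stmt_10 (n : ℤ) (g k : ℕ) (hg : 2 ≤ g) (w : Fin k → FreeGroup Bool)
    (c : Fin k → BS n) (hc : ∀ i, c i = PresentedGroup.mk (BSrels n) (w i)) :
    (∃ (x : Fin g → BS n) (z : Fin k → BS n),
        (List.ofFn fun j => (x j) ^ 2).prod *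
          (List.ofFn fun i => (z i)⁻¹ * c i * z i).prod = 1) ↔
      Even (sigmaT (List.ofFn w).prod) ∧
        (Even n ∨ Even (sigmaA (List.ofFn w).prod)) := by
  obtain rfl : c = fun i => PresentedGroup.mk (BSrels n) (w i) := funext hc
  have hprod : (List.ofFn fun i => PresentedGroup.mk (BSrels n) (w i)).prod =
      PresentedGroup.mk (BSrels n) (List.ofFn w).prod := by
    rw [map_list_prod, List.map_ofFn]
    rfl
  constructor
  · rintro ⟨x, z, h⟩
    have hsq {H : Type} [CommGroup H] (φ : BS n →* H) :
        IsSquare (φ (PresentedGroup.mk (BSrels n) (List.ofFn w).prod)) :=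
      hprod ▸ isSquare_map_prod_of_sq_prod_mul_conj_prod_eq_one φ h
    refine ⟨hsq BS.tExp, (em (Even n)).imp id fun hn => ?_⟩
    have hodd : (n : ZMod 2) = 1 := ZMod.intCast_eq_one_iff_odd.2 (Int.not_even_iff_odd.1 hn)
    exact BS.even_sigmaA_of_isSquare_aExpMod_two hodd (hsq (BS.aExpMod 2 hodd))
  · rintro ⟨ht, ha⟩
    obtain ⟨x, y, hxy⟩ := BS.exists_sq_mul_sq_eq_mk _ ht ha
    exact exists_sq_prod_mul_conj_prod_eq_one hg _ (hxy.trans hprod.symm)
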